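/- arXiv:1909.08141 — 5 statements merged into one kernel-verified Lean document; each statement's English description precedes it below -/
import Mathlib

section
/- If z is a complex number and X is an n×k real matrix of full column rank with k < n such that M_X (z I_n − W) = 0, where M_X = I_n − X(X'X)^{-1}X' and W is an n×n real matrix, then z is a real eigenvalue of W. -/
/-!
Since `X` has rank `k < n`, the projector `M_X` is nonzero; comparing a nonzero entry of both sides
of `z M_X = M_X W` shows that `z` is a quotient of two real numbers. A nonzero row of `M_X` is then
a left null vector of `z I - W`, so `det (z I - W) = 0` and `W` has a real eigenvector for `z`.
-/

open Matrix

/-- The orthogonal projector onto the orthogonal complement of the column space of `X`. -/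
noncomputable def MX {n k : ℕ} (X : Matrix (Fin n) (Fin k) ℝ) : Matrix (Fin n) (Fin n) ℝ :=
  1 - X * (Xᵀ * X)⁻¹ * Xᵀ

namespace Matrix

variable {n : Type*} [Fintype n] [DecidableEq n]

theorem det_eq_zero_of_mul_eq_zero {K : Type*} [Field K] {A B : Matrix n n K} (hA : A ≠ 0)
    (hAB : A * B = 0) : B.det = 0 := by
  obtain ⟨i, hi⟩ : ∃ i, A i ≠ 0 := by
    by_contra! h
    exact hA (funext h)
  refine exists_vecMul_eq_zero_iff.mp ⟨A i, hi, ?_⟩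
  rw [← mul_apply_eq_vecMul, hAB]
  rfl

theorem exists_mulVec_eq_smul_of_mul_smul_one_sub_eq_zero {K : Type*} [Field K]
    {A W : Matrix n n K} {r : K} (hA : A ≠ 0) (h : A * (r • 1 - W) = 0) :
    ∃ v ≠ 0, W *ᵥ v = r • v := by
  obtain ⟨v, hv, hWv⟩ := exists_mulVec_eq_zero_iff.mpr (det_eq_zero_of_mul_eq_zero hA h)
  refine ⟨v, hv, ?_⟩
  rw [sub_mulVec, smul_mulVec, one_mulVec, sub_eq_zero] at hWv
  exact hWv.symm

theorem map_ofReal_mul_smul_one_sub (A B : Matrix n n ℝ) (z : ℂ) :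
    A.map Complex.ofReal * (z • 1 - B.map Complex.ofReal) =
      z • A.map Complex.ofReal - (A * B).map Complex.ofReal := by
  rw [mul_sub, Matrix.mul_smul, mul_one]
  exact congrArg _ (Matrix.map_mul (f := Complex.ofRealHom)).symm

theorem exists_real_of_map_ofReal_mul_smul_one_sub_eq_zero {A B : Matrix n n ℝ} {z : ℂ}
    (hA : A ≠ 0) (h : A.map Complex.ofReal * (z • 1 - B.map Complex.ofReal) = 0) :
    ∃ r : ℝ, z = r ∧ A * (r • 1 - B) = 0 := by
  rw [map_ofReal_mul_smul_one_sub, sub_eq_zero] at h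
  obtain ⟨i, j, hij⟩ : ∃ i j, A i j ≠ 0 := by
    by_contra! h
    exact hA (funext₂ h)
  have hentry : z * A i j = ((A * B) i j : ℝ) := by simpa using congrFun₂ h i j
  have hz : z = ((A * B) i j / A i j : ℝ) := by
    rw [Complex.ofReal_div, ← hentry, mul_div_cancel_right₀ _ (by exact_mod_cast hij)]
  refine ⟨_, hz, ?_⟩
  rw [hz, ← map_smul' _ _ _ Complex.ofReal_mul] at h
  rw [mul_sub, Matrix.mul_smul, mul_one, map_injective Complex.ofReal_injective h, sub_self]

end Matrix

theorem MX_ne_zero {n k : ℕ} {X : Matrix (Fin n) (Fin k) ℝ} (hX : X.rank < n) : MX X ≠ 0 := by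
  intro h0
  have hproj : X * (Xᵀ * X)⁻¹ * Xᵀ = 1 := (sub_eq_zero.mp h0).symm
  have := (rank_mul_le_left _ Xᵀ).trans (rank_mul_le_left X (Xᵀ * X)⁻¹)
  rw [hproj, rank_one, Fintype.card_fin] at this
  omega

/-- If `M_X (z I − W) = 0` for a complex `z`, with `X` of full column rank `k < n`,
then `z` is a real eigenvalue of `W`. -/
theorem stmt0 {n k : ℕ} (hkn : k < n) (W : Matrix (Fin n) (Fin n) ℝ)
    (X : Matrix (Fin n) (Fin k) ℝ) (hX : X.rank = k) (z : ℂ)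
    (h : (MX X).map (Complex.ofReal) * (z • 1 - W.map (Complex.ofReal)) = 0) :
    z.im = 0 ∧ ∃ v : Fin n → ℝ, v ≠ 0 ∧ W.mulVec v = z.re • v := by
  have hMX : MX X ≠ 0 := MX_ne_zero (hX.trans_lt hkn)
  obtain ⟨r, rfl, hr⟩ := exists_real_of_map_ofReal_mul_smul_one_sub_eq_zero hMX h
  exact ⟨Complex.ofReal_im r, by
    simpa using exists_mulVec_eq_smul_of_mul_smul_one_sub_eq_zero hMX hr⟩
end

section
/- Let Σ be a symmetric positive definite n×n matrix, X an n×k matrix of full column rank with k < n, and C an (n−k)×n matrix with CC' = I_{n−k} and C'C = M_X. Then det(C Σ C') = det(Σ) · det(X'Σ^{-1}X) / det(X'X). -/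
open Matrix

/-- A matrix of full column rank has injective `mulVec`. -/
lemma mulVec_inj {n k : ℕ} (X : Matrix (Fin n) (Fin k) ℝ) (hX : X.rank = k) :
    Function.Injective X.mulVec := by
  have h := LinearMap.finrank_range_add_finrank_ker X.mulVecLin
  rw [Matrix.rank] at hX
  rw [hX] at h
  have hdom : Module.finrank ℝ (Fin k → ℝ) = k := by simp
  rw [hdom] at h
  have hker : LinearMap.ker X.mulVecLin = ⊥ := by
    rw [← Submodule.finrank_eq_zero (R := ℝ)]
    omega
  have hinj : Function.Injective X.mulVecLin := LinearMap.ker_eq_bot.mp hker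
  intro v w hvw
  exact hinj (by simpa [mulVecLin_apply] using hvw)

/-- `Xᵀ A X` is positive definite when `A` is and `X` has injective `mulVec`. -/
lemma posDef_conj {n k : ℕ} {A : Matrix (Fin n) (Fin n) ℝ} (hA : A.PosDef)
    (X : Matrix (Fin n) (Fin k) ℝ) (hX : Function.Injective X.mulVec) :
    (Xᵀ * A * X).PosDef := by
  have hXt : Xᴴ = Xᵀ := by ext i j; simp [conjTranspose_apply]
  rw [← hXt]
  refine PosDef.of_dotProduct_mulVec_pos ?_ ?_
  · exact isHermitian_conjTranspose_mul_mul X hA.1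
  · intro x hx
    have hXx : X *ᵥ x ≠ 0 := by
      intro h
      exact hx (hX (by simpa using h))
    simpa only [star_mulVec, dotProduct_mulVec, vecMul_vecMul] using hA.dotProduct_mulVec_pos hXx

/-- For symmetric positive definite `Σ`, full column rank `X` (`k < n`), and
`C` with `C C' = I_{n−k}` and `C' C = M_X`:
`det(C Σ C') = det(Σ) · det(X' Σ⁻¹ X) / det(X' X)`. -/
theorem stmt11 {n k : ℕ} (hkn : k < n)
    (S : Matrix (Fin n) (Fin n) ℝ) (hS : S.PosDef)
    (X : Matrix (Fin n) (Fin k) ℝ) (hX : X.rank = k)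
    (C : Matrix (Fin (n - k)) (Fin n) ℝ)
    (hC1 : C * Cᵀ = 1) (hC2 : Cᵀ * C = MX X) :
    (C * S * Cᵀ).det = S.det * (Xᵀ * S⁻¹ * X).det / (Xᵀ * X).det := by
  have hXinj := mulVec_inj X hX
  -- basic positive definiteness facts
  have hone : (1 : Matrix (Fin n) (Fin n) ℝ).PosDef := Matrix.PosDef.one
  have hXtX : (Xᵀ * X).PosDef := by
    have := posDef_conj hone X hXinj
    simpa using this
  have hSinv : S⁻¹.PosDef := hS.inv
  have hXSX : (Xᵀ * S⁻¹ * X).PosDef := posDef_conj hSinv X hXinj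
  have hq : (0:ℝ) < (Xᵀ * X).det := hXtX.det_pos
  have hp : (0:ℝ) < (Xᵀ * S⁻¹ * X).det := hXSX.det_pos
  have hSdetU : IsUnit S.det := hS.det_pos.ne'.isUnit
  have hSsym : Sᵀ = S := hS.isHermitian
  have hSinvS : S⁻¹ * S = 1 := nonsing_inv_mul S hSdetU
  have hSSinv : S * S⁻¹ = 1 := mul_nonsing_inv S hSdetU
  have hSinvsym : S⁻¹ᵀ = S⁻¹ := hSinv.isHermitian
  -- C * X = 0
  have hMXX : MX X * X = 0 := by
    unfold MX
    have h1 : (Xᵀ * X)⁻¹ * (Xᵀ * X) = 1 := nonsing_inv_mul _ hXtX.det_pos.ne'.isUnit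
    rw [Matrix.sub_mul, Matrix.one_mul, Matrix.mul_assoc, Matrix.mul_assoc,
      h1, Matrix.mul_one, sub_self]
  have hCX : C * X = 0 := by
    have h2 : Cᵀ * C * X = 0 := by rw [hC2, hMXX]
    calc C * X = (C * Cᵀ) * (C * X) := by rw [hC1, Matrix.one_mul]
    _ = C * (Cᵀ * C * X) := by
        rw [Matrix.mul_assoc, Matrix.mul_assoc]
    _ = 0 := by rw [h2, Matrix.mul_zero]
  have hXC : Xᵀ * Cᵀ = 0 := by
    have := congrArg transpose hCX
    simpa [transpose_mul] using this
  -- the stacked matrices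
  set T : Matrix (Fin (n-k) ⊕ Fin k) (Fin n) ℝ := fromRows C (Xᵀ * S⁻¹) with hT
  set T0 : Matrix (Fin (n-k) ⊕ Fin k) (Fin n) ℝ := fromRows C Xᵀ with hT0
  have e : (Fin (n-k) ⊕ Fin k) ≃ Fin n :=
    finSumFinEquiv.trans (finCongr (Nat.sub_add_cancel hkn.le))
  -- block computations
  have hTt : Tᵀ = fromCols Cᵀ (S⁻¹ * X) := by
    rw [hT, transpose_fromRows, transpose_mul, hSinvsym, transpose_transpose]
  have hT0t : T0ᵀ = fromCols Cᵀ X := by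
    rw [hT0, transpose_fromRows, transpose_transpose]
  have hblock1 : T * S * Tᵀ = fromBlocks (C * S * Cᵀ) 0 0 (Xᵀ * S⁻¹ * X) := by
    rw [hTt, hT, fromRows_mul, Matrix.mul_assoc Xᵀ S⁻¹ S, hSinvS, Matrix.mul_one,
      fromRows_mul_fromCols]
    have e1 : C * S * (S⁻¹ * X) = 0 := by
      rw [Matrix.mul_assoc C S, ← Matrix.mul_assoc S, hSSinv, Matrix.one_mul, hCX]
    have e2 : Xᵀ * (S⁻¹ * X) = Xᵀ * S⁻¹ * X := by rw [Matrix.mul_assoc]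
    rw [e1, e2, hXC]
  have hblock2 : T * T0ᵀ = fromBlocks 1 0 (Xᵀ * S⁻¹ * Cᵀ) (Xᵀ * S⁻¹ * X) := by
    rw [hT0t, hT, fromRows_mul_fromCols, hC1, hCX]
  have hblock3 : T0 * T0ᵀ = fromBlocks 1 0 0 (Xᵀ * X) := by
    rw [hT0t, hT0, fromRows_mul_fromCols, hC1, hCX, hXC]
  -- determinants via square reindexed versions
  set a : ℝ := (T.submatrix id e).det with ha
  set b : ℝ := (T0.submatrix id e).det with hb
  have hdet1 : (T * S * Tᵀ).det = a * a * S.det := by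
    have h1 : T * S * Tᵀ = (T.submatrix id e) * ((S.submatrix e e) * (Tᵀ.submatrix e id)) := by
      rw [submatrix_mul_equiv, submatrix_mul_equiv, submatrix_id_id, Matrix.mul_assoc]
    rw [h1, det_mul, det_mul, det_submatrix_equiv_self,
      ← transpose_submatrix, det_transpose]
    ring
  have hdet2 : (T * T0ᵀ).det = a * b := by
    have h1 : T * T0ᵀ = (T.submatrix id e) * (T0ᵀ.submatrix e id) := by
      rw [submatrix_mul_equiv, submatrix_id_id]
    rw [h1, det_mul, ← transpose_submatrix, det_transpose]
  have hdet3 : (T0 * T0ᵀ).det = b * b := by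
    have h1 : T0 * T0ᵀ = (T0.submatrix id e) * (T0ᵀ.submatrix e id) := by
      rw [submatrix_mul_equiv, submatrix_id_id]
    rw [h1, det_mul, ← transpose_submatrix, det_transpose]
  have eq1 : (C * S * Cᵀ).det * (Xᵀ * S⁻¹ * X).det = a * a * S.det := by
    rw [← hdet1, hblock1, det_fromBlocks_zero₂₁]
  have eq2 : a * b = (Xᵀ * S⁻¹ * X).det := by
    rw [← hdet2, hblock2, det_fromBlocks_zero₁₂, det_one, one_mul]
  have eq3 : b * b = (Xᵀ * X).det := by
    rw [← hdet3, hblock3, det_fromBlocks_zero₂₁, det_one, one_mul]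
  -- final algebra
  set p : ℝ := (Xᵀ * S⁻¹ * X).det
  set q : ℝ := (Xᵀ * X).det
  rw [eq_div_iff hq.ne']
  have key : ((C * S * Cᵀ).det * q) * p = (S.det * p) * p := by
    linear_combination q * eq1 - S.det * a * a * eq3 + S.det * (a * b + p) * eq2
  exact mul_right_cancel₀ hp.ne' key
end

section
/- Let Σ be a symmetric positive definite n×n matrix, X an n×k full column rank matrix with k < n, and D a full row rank (n−k)×n matrix with DX = 0. Then D'(DΣD')^{-1}D = Σ^{-1} − Σ^{-1}X(X'Σ^{-1}X)^{-1}X'Σ^{-1}. -/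
open Matrix

lemma aux_inj {m k : ℕ} (A : Matrix (Fin m) (Fin k) ℝ) (hA : A.rank = k) :
    Function.Injective A.mulVec := by
  change Function.Injective A.mulVecLin
  rw [← LinearMap.ker_eq_bot]
  have h := LinearMap.finrank_range_add_finrank_ker A.mulVecLin
  rw [Matrix.rank] at hA
  rw [hA] at h
  simp only [Module.finrank_fintype_fun_eq_card, Fintype.card_fin] at h
  have : Module.finrank ℝ (LinearMap.ker A.mulVecLin) = 0 := by omega
  exact Submodule.finrank_eq_zero.mp this

lemma aux_posdef {m k : ℕ} (S : Matrix (Fin m) (Fin m) ℝ) (hS : S.PosDef)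
    (B : Matrix (Fin m) (Fin k) ℝ) (hB : Function.Injective B.mulVec) :
    (Bᵀ * S * B).PosDef := by
  rw [Matrix.posDef_iff_dotProduct_mulVec]
  constructor
  · have := Matrix.isHermitian_conjTranspose_mul_mul B hS.isHermitian
    simpa using this
  · intro x hx
    have hBx : B *ᵥ x ≠ 0 := by
      intro h
      apply hx
      apply hB
      simpa using h
    have := hS.dotProduct_mulVec_pos hBx
    simpa [Matrix.dotProduct_mulVec, Matrix.vecMul_vecMul, ← Matrix.mulVec_mulVec,
      Matrix.star_mulVec, Matrix.vecMul_transpose, Matrix.mul_assoc,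
      Matrix.dotProduct_mulVec] using this

/-- For symmetric positive definite `Σ`, full column rank `X` (`k < n`), and a
full row rank `(n−k) × n` matrix `D` with `DX = 0`:
`D'(D Σ D')⁻¹ D = Σ⁻¹ − Σ⁻¹ X (X' Σ⁻¹ X)⁻¹ X' Σ⁻¹`. -/
theorem stmt12 {n k : ℕ} (hkn : k < n)
    (S : Matrix (Fin n) (Fin n) ℝ) (hS : S.PosDef)
    (X : Matrix (Fin n) (Fin k) ℝ) (hX : X.rank = k)
    (D : Matrix (Fin (n - k)) (Fin n) ℝ) (hD : D.rank = n - k) (hDX : D * X = 0) :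
    Dᵀ * (D * S * Dᵀ)⁻¹ * D = S⁻¹ - S⁻¹ * X * (Xᵀ * S⁻¹ * X)⁻¹ * Xᵀ * S⁻¹ := by
  have injX : Function.Injective X.mulVec := aux_inj X hX
  have injDt : Function.Injective Dᵀ.mulVec := by
    apply aux_inj
    rw [Matrix.rank_transpose]; exact hD
  -- positive definiteness / invertibility facts
  have hSinv : S⁻¹.PosDef := hS.inv
  have hDSD : (D * S * Dᵀ).PosDef := by
    have := aux_posdef S hS Dᵀ injDt
    simpa using this
  have hXSX : (Xᵀ * S⁻¹ * X).PosDef := aux_posdef S⁻¹ hSinv X injX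
  have hSdet : IsUnit S.det := (Matrix.isUnit_iff_isUnit_det S).mp hS.isUnit
  have hDSDdet : IsUnit (D * S * Dᵀ).det := (Matrix.isUnit_iff_isUnit_det _).mp hDSD.isUnit
  have hXSXdet : IsUnit (Xᵀ * S⁻¹ * X).det := (Matrix.isUnit_iff_isUnit_det _).mp hXSX.isUnit
  set M := Dᵀ * (D * S * Dᵀ)⁻¹ * D with hM
  set N := S⁻¹ - S⁻¹ * X * (Xᵀ * S⁻¹ * X)⁻¹ * Xᵀ * S⁻¹ with hN
  set E := M - N with hE
  -- E annihilates X
  have hMX : M * X = 0 := by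
    rw [hM, Matrix.mul_assoc, hDX, Matrix.mul_zero]
  have hNX : N * X = 0 := by
    rw [hN]
    have : (S⁻¹ * X * (Xᵀ * S⁻¹ * X)⁻¹ * Xᵀ * S⁻¹) * X
        = S⁻¹ * X * ((Xᵀ * S⁻¹ * X)⁻¹ * (Xᵀ * S⁻¹ * X)) := by
      simp only [Matrix.mul_assoc]
    rw [Matrix.sub_mul, this, Matrix.nonsing_inv_mul _ hXSXdet, Matrix.mul_one, sub_self]
  have hEX : E * X = 0 := by rw [hE, Matrix.sub_mul, hMX, hNX, sub_self]
  -- E annihilates S * Dᵀ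
  have hMSD : M * (S * Dᵀ) = Dᵀ := by
    rw [hM]
    have : Dᵀ * (D * S * Dᵀ)⁻¹ * D * (S * Dᵀ) = Dᵀ * ((D * S * Dᵀ)⁻¹ * (D * S * Dᵀ)) := by
      simp only [Matrix.mul_assoc]
    rw [this, Matrix.nonsing_inv_mul _ hDSDdet, Matrix.mul_one]
  have hNSD : N * (S * Dᵀ) = Dᵀ := by
    rw [hN, Matrix.sub_mul]
    have h1 : S⁻¹ * (S * Dᵀ) = Dᵀ := by
      rw [← Matrix.mul_assoc, Matrix.nonsing_inv_mul _ hSdet, Matrix.one_mul]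
    have h2 : (S⁻¹ * X * (Xᵀ * S⁻¹ * X)⁻¹ * Xᵀ * S⁻¹) * (S * Dᵀ) = 0 := by
      have hXD : Xᵀ * Dᵀ = 0 := by
        have := congrArg Matrix.transpose hDX
        simpa [Matrix.transpose_mul] using this
      calc (S⁻¹ * X * (Xᵀ * S⁻¹ * X)⁻¹ * Xᵀ * S⁻¹) * (S * Dᵀ)
          = S⁻¹ * X * (Xᵀ * S⁻¹ * X)⁻¹ * ((Xᵀ * (S⁻¹ * S)) * Dᵀ) := by
            simp only [Matrix.mul_assoc]
        _ = S⁻¹ * X * (Xᵀ * S⁻¹ * X)⁻¹ * (Xᵀ * Dᵀ) := by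
            rw [Matrix.nonsing_inv_mul _ hSdet, Matrix.mul_one]
        _ = 0 := by rw [hXD, Matrix.mul_zero]
    rw [h1, h2, sub_zero]
  have hESD : E * (S * Dᵀ) = 0 := by rw [hE, Matrix.sub_mul, hMSD, hNSD, sub_self]
  -- build the invertible matrix B = [X | S Dᵀ]
  have hnk : k + (n - k) = n := Nat.add_sub_cancel' hkn.le
  let e : Fin k ⊕ Fin (n - k) ≃ Fin n := finSumFinEquiv.trans (finCongr hnk)
  let F : Matrix (Fin n) (Fin k ⊕ Fin (n - k)) ℝ := Matrix.fromCols X (S * Dᵀ)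
  let B : Matrix (Fin n) (Fin n) ℝ := F.submatrix id e.symm
  have hEB : E * B = 0 := by
    have : E * B = (E * F).submatrix id e.symm := by
      ext i j
      simp [B, Matrix.mul_apply, Matrix.submatrix_apply]
    rw [this, Matrix.mul_fromCols, hEX, hESD]
    ext i j
    rcases h : e.symm j with v | v <;> simp [Matrix.submatrix_apply, h]
  have hBunit : IsUnit B := by
    rw [← Matrix.mulVec_injective_iff_isUnit]
    have key : ∀ v, B *ᵥ v = 0 → v = 0 := by
      intro v hv
      have hF : F *ᵥ (v ∘ e) = 0 := by
        have h1 : B *ᵥ v = F *ᵥ (v ∘ e) := by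
          rw [Matrix.submatrix_mulVec_equiv]
          simp [Equiv.symm_symm]
        rw [← h1, hv]
      set a : Fin k → ℝ := fun i => v (e (Sum.inl i)) with ha
      set b : Fin (n - k) → ℝ := fun i => v (e (Sum.inr i)) with hb
      have helim : v ∘ e = Sum.elim a b := by
        funext i; cases i <;> rfl
      rw [helim, Matrix.fromCols_mulVec_sumElim] at hF
      have hDapp : (D * X) *ᵥ a + (D * S * Dᵀ) *ᵥ b = 0 := by
        have := congrArg (fun w => D *ᵥ w) hF
        simpa [Matrix.mulVec_add, Matrix.mulVec_mulVec, Matrix.mul_assoc] using this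
      rw [hDX] at hDapp
      simp only [Matrix.zero_mulVec, zero_add] at hDapp
      have hb0 : b = 0 := by
        have hinj := Matrix.mulVec_injective_iff_isUnit.mpr hDSD.isUnit
        apply hinj
        rw [hDapp, Matrix.mulVec_zero]
      rw [hb0, Matrix.mulVec_zero, add_zero] at hF
      have ha0 : a = 0 := by
        apply injX
        rw [hF, Matrix.mulVec_zero]
      funext j
      have : v j = Sum.elim a b (e.symm j) := by
        rw [← helim]; simp
      rw [this, ha0, hb0]
      cases e.symm j <;> rfl
    intro u w huw
    have : B *ᵥ (u - w) = 0 := by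
      rw [Matrix.mulVec_sub, huw, sub_self]
    have := key _ this
    exact sub_eq_zero.mp this
  have hBdet : IsUnit B.det := (Matrix.isUnit_iff_isUnit_det B).mp hBunit
  have hE0 : E = 0 := by
    calc E = E * (B * B⁻¹) := by rw [Matrix.mul_nonsing_inv B hBdet, Matrix.mul_one]
      _ = (E * B) * B⁻¹ := by rw [Matrix.mul_assoc]
      _ = 0 := by rw [hEB, Matrix.zero_mul]
  have : M - N = 0 := hE0
  exact sub_eq_zero.mp this
end

section
/- Let W be an n×n real matrix, X an n×k matrix of full rank with k ≤ n − 2, and suppose there is no real eigenvalue ω of W with M_X(ω I_n − W) = 0 (and more strongly, there is no scalar α with (I_n − αW)y ∈ col(X) for all y). Then the set B = {y ∈ R^n : M_X(I_n − λW)y = 0 for some λ ∈ R} is a Lebesgue-null subset of R^n. -/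
/-!
If `M (I - λW) y = 0` then `M y = λ (M W) y`, so `M y` and `(M W) y` are proportional and every
`2 × 2` minor of the pair vanishes. Such a minor is a quadratic polynomial in `y`, and the zero set
of a nonzero real polynomial is Lebesgue-null (induction on the dimension and Fubini). So it
suffices that some minor is not identically zero. Otherwise `M y ∥ (M W) y` for all `y`; since `M`
fixes `ker Xᵀ`, of dimension `n - k ≥ 2`, `M` has rank at least two, and a linear map `B` with
`B y ∥ A y` for all `y`, where `A` has rank at least two, is a scalar multiple `ω A`. That gives
`M (ω I - W) = 0`, excluded by hypothesis.
-/

open Matrix MeasureTheory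

theorem MvPolynomial.volume_setOf_eval_eq_zero :
    ∀ {n : ℕ} {p : MvPolynomial (Fin n) ℝ}, p ≠ 0 → volume {x | eval x p = 0} = 0
  | 0, p, hp => by
    suffices {x : Fin 0 → ℝ | eval x p = 0} = ∅ by simp [this]
    refine Set.eq_empty_of_forall_notMem fun x hx => hp (MvPolynomial.funext fun y => ?_)
    rwa [Subsingleton.elim y x, map_zero]
  | n + 1, p, hp => by
    set q := finSuccEquiv ℝ n p
    have hq : q ≠ 0 := (EmbeddingLike.map_ne_zero_iff (f := finSuccEquiv ℝ n)).2 hp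
    have hlead : ∀ᵐ z : Fin n → ℝ, eval z q.leadingCoeff ≠ 0 :=
      measure_eq_zero_iff_ae_notMem.1
        (volume_setOf_eval_eq_zero (Polynomial.leadingCoeff_ne_zero.2 hq))
    set S : Set (ℝ × (Fin n → ℝ)) := {tz | eval (Fin.cons tz.1 tz.2) p = 0}
    have hS : MeasurableSet S :=
      measurableSet_eq_fun ((continuous_eval p).comp (by fun_prop)).measurable measurable_const
    have hpre : {x | eval x p = 0} = MeasurableEquiv.piFinSuccAbove (fun _ => ℝ) 0 ⁻¹' S := by
      ext x
      simp [S, MeasurableEquiv.piFinSuccAbove_apply, Fin.insertNthEquiv]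
    rw [hpre, (volume_preserving_piFinSuccAbove (fun _ => ℝ) 0).measure_preimage
      hS.nullMeasurableSet, Measure.volume_eq_prod, Measure.prod_apply_symm hS]
    refine (lintegral_congr_ae ?_).trans lintegral_zero
    -- Fubini: off the null zero set of the leading coefficient, a slice is finite.
    filter_upwards [hlead] with z hz
    have hslice : q.map (eval z) ≠ 0 := fun h0 => hz <| by
      rw [Polynomial.leadingCoeff, ← Polynomial.coeff_map, h0, Polynomial.coeff_zero]
    refine ((Polynomial.finite_setOfPred_isRoot hslice).subset fun t ht => ?_).measure_zero _
    simpa [S, eval_eq_eval_mv_eval'] using ht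

/-- Linear dependence of `u` and `w`, phrased through the vanishing of all `2 × 2` minors so that
it is visibly a polynomial condition. -/
def Parallel {ι K : Type*} [Mul K] (u w : ι → K) : Prop :=
  ∀ i j, u i * w j = u j * w i

namespace Parallel

variable {ι K : Type*} [Field K] {u p r w : ι → K}

lemma of_eq_smul {c : K} (h : u = c • w) : Parallel u w := fun i j => by
  simp only [h, Pi.smul_apply, smul_eq_mul]; ring

lemma exists_eq_smul (h : Parallel u w) (hu : u ≠ 0) : ∃ c : K, w = c • u := by
  obtain ⟨j, hj⟩ := Function.ne_iff.mp hu
  refine ⟨w j / u j, funext fun i => ?_⟩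
  rw [Pi.smul_apply, smul_eq_mul, div_mul_eq_mul_div, eq_div_iff hj]
  linear_combination h j i

lemma sub_smul_of_add {ω : K} (hpr : Parallel p r) (h : Parallel (u + p) (ω • u + r)) :
    Parallel u (r - ω • p) := fun i j => by
  have := h i j
  simp only [Pi.add_apply, Pi.sub_apply, Pi.smul_apply, smul_eq_mul] at this ⊢
  linear_combination this - hpr i j

lemma eq_zero_of_linearIndependent {u₀ u₁ : ι → K} (hli : LinearIndependent K ![u₀, u₁])
    (h₀ : Parallel u₀ w) (h₁ : Parallel u₁ w) : w = 0 := by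
  obtain ⟨c₀, rfl⟩ := h₀.exists_eq_smul (hli.ne_zero 0)
  obtain ⟨c₁, hc⟩ := h₁.exists_eq_smul (hli.ne_zero 1)
  obtain ⟨rfl, -⟩ :=
    LinearIndependent.pair_iff.1 hli c₀ (-c₁) (by rw [hc, neg_smul, add_neg_cancel])
  exact zero_smul K u₀

lemma eq_of_add {u₀ u₁ : ι → K} (hli : LinearIndependent K ![u₀, u₁]) {c₀ c₁ : K}
    (h : Parallel (u₀ + u₁) (c₀ • u₀ + c₁ • u₁)) : c₀ = c₁ := by
  have hne : u₀ + u₁ ≠ 0 := fun h0 =>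
    one_ne_zero (LinearIndependent.pair_iff.1 hli 1 1 (by simpa using h0)).1
  obtain ⟨c, hc⟩ := h.exists_eq_smul hne
  obtain ⟨h₀, h₁⟩ := LinearIndependent.pair_iff.1 hli (c₀ - c) (c₁ - c) (by
    linear_combination (norm := module) hc)
  linear_combination h₀ - h₁

end Parallel

namespace Matrix

section

variable {m n K : Type*} [Fintype n] [Field K]

lemma exists_linearIndependent_mulVec_of_two_le_rank {A : Matrix m n K} (hA : 2 ≤ A.rank) :
    ∃ v₀ v₁ : n → K, LinearIndependent K ![A *ᵥ v₀, A *ᵥ v₁] := by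
  obtain ⟨f, hf⟩ := exists_linearIndependent_of_le_finrank hA
  choose v hv using fun i => (f i).2
  refine ⟨v 0, v 1, ?_⟩
  have hval : ![A *ᵥ v 0, A *ᵥ v 1] = Subtype.val ∘ f := by
    ext i : 1
    fin_cases i <;> simp [← hv]
  rw [hval]
  exact hf.map' _ (Submodule.ker_subtype _)

theorem exists_eq_smul_of_forall_parallel {A B : Matrix m n K} (hA : 2 ≤ A.rank)
    (h : ∀ y, Parallel (A *ᵥ y) (B *ᵥ y)) : ∃ ω : K, B = ω • A := by
  obtain ⟨v₀, v₁, hli⟩ := exists_linearIndependent_mulVec_of_two_le_rank hA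
  obtain ⟨c₀, hc₀⟩ := (h v₀).exists_eq_smul (hli.ne_zero 0)
  obtain ⟨c₁, hc₁⟩ := (h v₁).exists_eq_smul (hli.ne_zero 1)
  have hc : c₀ = c₁ := Parallel.eq_of_add hli (by simpa [mulVec_add, hc₀, hc₁] using h (v₀ + v₁))
  subst hc
  refine ⟨c₀, ext_iff_mulVec.2 fun y => ?_⟩
  have key : ∀ v, B *ᵥ v = c₀ • A *ᵥ v → Parallel (A *ᵥ v) (B *ᵥ y - c₀ • A *ᵥ y) := fun v hv =>
    (h y).sub_smul_of_add (by simpa [mulVec_add, hv] using h (v + y))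
  rw [smul_mulVec, ← sub_eq_zero]
  exact Parallel.eq_zero_of_linearIndependent hli (key v₀ hc₀) (key v₁ hc₁)

end

noncomputable def mulVecPoly {m n R : Type*} [CommSemiring R] [Fintype n] (A : Matrix m n R)
    (i : m) : MvPolynomial n R :=
  ∑ j, MvPolynomial.C (A i j) * MvPolynomial.X j

@[simp]
lemma eval_mulVecPoly {m n R : Type*} [CommSemiring R] [Fintype n] (A : Matrix m n R) (i : m)
    (y : n → R) : MvPolynomial.eval y (A.mulVecPoly i) = (A *ᵥ y) i := by
  simp [mulVecPoly, mulVec, dotProduct]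

theorem volume_setOf_parallel_mulVec {m : Type*} {n : ℕ} {A B : Matrix m (Fin n) ℝ}
    (h : ∃ y, ¬ Parallel (A *ᵥ y) (B *ᵥ y)) :
    volume {y | Parallel (A *ᵥ y) (B *ᵥ y)} = 0 := by
  obtain ⟨y₀, hy₀⟩ := h
  simp only [Parallel, not_forall] at hy₀
  obtain ⟨i, j, hij⟩ := hy₀
  set P := A.mulVecPoly i * B.mulVecPoly j - A.mulVecPoly j * B.mulVecPoly i
  have hP : ∀ y, MvPolynomial.eval y P = (A *ᵥ y) i * (B *ᵥ y) j - (A *ᵥ y) j * (B *ᵥ y) i := by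
    simp [P]
  refine measure_mono_null (fun y hy => ?_)
    (MvPolynomial.volume_setOf_eval_eq_zero (p := P) fun h0 => hij ?_)
  · show MvPolynomial.eval y P = 0
    rw [hP, hy i j, sub_self]
  · rw [← sub_eq_zero, ← hP, h0, map_zero]

end Matrix

lemma MX_mulVec_of_transpose_mulVec_eq_zero {n k : ℕ} {X : Matrix (Fin n) (Fin k) ℝ}
    {v : Fin n → ℝ} (hv : Xᵀ *ᵥ v = 0) : MX X *ᵥ v = v := by
  rw [MX, sub_mulVec, one_mulVec, ← mulVec_mulVec, hv, mulVec_zero, sub_zero]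

lemma le_rank_MX_add_rank {n k : ℕ} (X : Matrix (Fin n) (Fin k) ℝ) :
    n ≤ (MX X).rank + X.rank := by
  have hker : LinearMap.ker Xᵀ.mulVecLin ≤ LinearMap.range (MX X).mulVecLin := fun v hv =>
    ⟨v, MX_mulVec_of_transpose_mulVec_eq_zero hv⟩
  have := LinearMap.finrank_range_add_finrank_ker Xᵀ.mulVecLin
  have := Submodule.finrank_mono hker
  rw [← rank_transpose X]
  simp only [Module.finrank_fin_fun] at *
  unfold Matrix.rank
  omega

theorem stmt16_general {n k : ℕ} (hkn : k + 2 ≤ n) (W : Matrix (Fin n) (Fin n) ℝ)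
    (X : Matrix (Fin n) (Fin k) ℝ) (hX : X.rank = k)
    (h1 : ¬ ∃ ω : ℝ, MX X * (ω • 1 - W) = 0) :
    volume {y : Fin n → ℝ | ∃ l : ℝ, (MX X).mulVec ((1 - l • W).mulVec y) = 0} = 0 := by
  have hrank : 2 ≤ (MX X).rank := by
    have := le_rank_MX_add_rank X
    omega
  have hnot : ∃ y, ¬ Parallel (MX X *ᵥ y) ((MX X * W) *ᵥ y) := by
    by_contra! hpar
    obtain ⟨ω, hω⟩ := exists_eq_smul_of_forall_parallel hrank hpar
    exact h1 ⟨ω, by rw [Matrix.mul_sub, Matrix.mul_smul, Matrix.mul_one, hω, sub_self]⟩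
  refine measure_mono_null (fun y ⟨l, hl⟩ => Parallel.of_eq_smul (c := l) ?_)
    (volume_setOf_parallel_mulVec hnot)
  rwa [sub_mulVec, one_mulVec, mulVec_sub, smul_mulVec, mulVec_smul, mulVec_mulVec,
    sub_eq_zero] at hl

/-- Under Assumption 1 (no scalar `ω` with `M_X(ω I − W) = 0`, and no scalar
`α` with `M_X(I − αW) = 0`), the set of `y` that can be perfectly fitted,
`B = {y : M_X(I − λW) y = 0 for some λ ∈ ℝ}`, is Lebesgue-null. -/
theorem stmt16 {n k : ℕ} (hkn : k + 2 ≤ n) (W : Matrix (Fin n) (Fin n) ℝ)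
    (X : Matrix (Fin n) (Fin k) ℝ) (hX : X.rank = k)
    (h1 : ¬ ∃ ω : ℝ, MX X * (ω • 1 - W) = 0)
    (h2 : ¬ ∃ α : ℝ, MX X * (1 - α • W) = 0) :
    volume {y : Fin n → ℝ | ∃ l : ℝ, (MX X).mulVec ((1 - l • W).mulVec y) = 0} = 0 :=
  stmt16_general hkn W X hX h1
end

section
/- Let W be an n×n real matrix and suppose M_X(ω I_n − W) = 0 for some real eigenvalue ω of W, where X is n×k of full column rank, k < n. Then for every λ with I_n − λW invertible, M_X(I_n − λW) = (1 − λω)M_X, and consequently for every y ∉ col(X), the profile quantity y'(I_n − λW)' M_X (I_n − λW) y equals (1 − λω)² y' M_X y. -/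
open Matrix

lemma MX_transpose {n k : ℕ} (X : Matrix (Fin n) (Fin k) ℝ) : (MX X)ᵀ = MX X := by
  unfold MX
  rw [transpose_sub, transpose_one, transpose_mul, transpose_mul, transpose_transpose,
    transpose_nonsing_inv, transpose_mul, transpose_transpose, Matrix.mul_assoc]

section

variable {ι R : Type*} [Fintype ι] [CommRing R]

lemma Matrix.mul_eq_smul_of_mul_smul_one_sub_eq_zero [DecidableEq ι]
    {P W : Matrix ι ι R} {ω : R} (h : P * (ω • 1 - W) = 0) : P * W = ω • P := by
  rw [Matrix.mul_sub, sub_eq_zero, Matrix.mul_smul, Matrix.mul_one] at h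
  exact h.symm

lemma Matrix.mul_one_sub_smul_of_mul_eq_smul [DecidableEq ι] {P W : Matrix ι ι R} {ω : R}
    (h : P * W = ω • P) (l : R) : P * (1 - l • W) = (1 - l * ω) • P := by
  rw [Matrix.mul_sub, Matrix.mul_one, Matrix.mul_smul, h, sub_smul, one_smul, smul_smul]

lemma Matrix.dotProduct_mulVec_mulVec_eq_sq_mul {P A : Matrix ι ι R} {c : R}
    (hP : Pᵀ = P) (hA : P * A = c • P) (y : ι → R) :
    A *ᵥ y ⬝ᵥ P *ᵥ (A *ᵥ y) = c ^ 2 * (y ⬝ᵥ P *ᵥ y) := by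
  -- `Aᵀ P = (P A)ᵀ = c • P` because `P` is symmetric.
  have hquad : Aᵀ * (P * A) = c ^ 2 • P := by
    rw [hA, Matrix.mul_smul, ← hP, ← transpose_mul, hA, transpose_smul, hP, smul_smul, sq]
  calc A *ᵥ y ⬝ᵥ P *ᵥ (A *ᵥ y) = y ⬝ᵥ (Aᵀ * (P * A)) *ᵥ y := by
        simp only [dotProduct_mulVec, ← vecMul_vecMul, vecMul_transpose]
    _ = c ^ 2 * (y ⬝ᵥ P *ᵥ y) := by
        rw [hquad, smul_mulVec, dotProduct_smul, smul_eq_mul]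

end

theorem stmt17_general {n k : ℕ} (W : Matrix (Fin n) (Fin n) ℝ)
    (X : Matrix (Fin n) (Fin k) ℝ) (ω : ℝ)
    (h : MX X * (ω • 1 - W) = 0)
    (l : ℝ) :
    MX X * (1 - l • W) = (1 - l * ω) • MX X ∧
    ∀ y : Fin n → ℝ, (¬ ∃ c : Fin k → ℝ, X.mulVec c = y) →
      ((1 - l • W).mulVec y) ⬝ᵥ (MX X).mulVec ((1 - l • W).mulVec y) =
        (1 - l * ω) ^ 2 * (y ⬝ᵥ (MX X).mulVec y) := by
  have hAbsorb := mul_one_sub_smul_of_mul_eq_smul (mul_eq_smul_of_mul_smul_one_sub_eq_zero h) l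
  exact ⟨hAbsorb, fun y _ => dotProduct_mulVec_mulVec_eq_sq_mul (MX_transpose X) hAbsorb y⟩

/-- If `M_X(ω I − W) = 0` for a real eigenvalue `ω` of `W`, then for every `λ`
with `I − λW` invertible, `M_X(I − λW) = (1 − λω) M_X`, and hence for every `y ∉ col(X)`,
`y'(I − λW)' M_X (I − λW) y = (1 − λω)² y' M_X y`. -/
theorem stmt17 {n k : ℕ} (hkn : k < n) (W : Matrix (Fin n) (Fin n) ℝ)
    (X : Matrix (Fin n) (Fin k) ℝ) (hX : X.rank = k) (ω : ℝ)
    (hω : ∃ v : Fin n → ℝ, v ≠ 0 ∧ W.mulVec v = ω • v)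
    (h : MX X * (ω • 1 - W) = 0)
    (l : ℝ) (hS : IsUnit (1 - l • W)) :
    MX X * (1 - l • W) = (1 - l * ω) • MX X ∧
    ∀ y : Fin n → ℝ, (¬ ∃ c : Fin k → ℝ, X.mulVec c = y) →
      ((1 - l • W).mulVec y) ⬝ᵥ (MX X).mulVec ((1 - l • W).mulVec y) =
        (1 - l * ω) ^ 2 * (y ⬝ᵥ (MX X).mulVec y) :=
  stmt17_general W X ω h l
end
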